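/- arXiv:1504.08241 — 3 statements merged into one kernel-verified Lean document; each statement's English description precedes it below -/
import Mathlib

section
/- Let (I_t)_{t∈ℕ} be i.i.d. real random variables with mean μ* ≤ μ < 0, sixth-moment bounds E[(I_0-μ*)^k] ≤ M for k ∈ {1,…,6}, and P(I_0 ≤ 0) ≥ p_0 > 0. Then there is a constant p = p(μ, M, p_0) > 0 such that P(for all t ∈ ℕ, ∑_{s=0}^{t-1} I_s ≤ 0) ≥ p. -/
open MeasureTheory ProbabilityTheory Finset

section AuxStmt4

lemma markov_arith {m M m2 m4 t u : ℝ} (hm : 0 < m) (hM : 0 < M)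
    (hm2nn : 0 ≤ m2) (hm2le : m2 ≤ M) (hm4nn : 0 ≤ m4) (hm4le : m4 ≤ M)
    (ht : 1 ≤ t) (hu : 1 ≤ u) :
    (u * m4 + 3 * u * (u - 1) * m2 ^ 2) / ((m/4) * t + u * (m/2)) ^ 4
      ≤ (256 * (M + 3 * M ^ 2) / m ^ 4) / (t + u) ^ 2 := by
  have hu0 : 0 < u := by linarith
  have ht0 : 0 < t := by linarith
  have hb : (m/4) * (t + u) ≤ (m/4) * t + u * (m/2) := by nlinarith
  have hbpos : 0 < (m/4) * (t + u) := by positivity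
  have hm2sq : m2 ^ 2 ≤ M ^ 2 := by nlinarith
  have hnum : u * m4 + 3 * u * (u - 1) * m2 ^ 2 ≤ u ^ 2 * (M + 3 * M ^ 2) := by
    have a1 : u * m4 ≤ u * M := mul_le_mul_of_nonneg_left hm4le hu0.le
    have a2 : u * M ≤ u ^ 2 * M := by nlinarith [mul_nonneg (mul_nonneg hu0.le (by linarith : (0:ℝ) ≤ u - 1)) hM.le]
    have a3 : 3 * u * (u - 1) * m2 ^ 2 ≤ 3 * u * (u - 1) * M ^ 2 :=
      mul_le_mul_of_nonneg_left hm2sq (by nlinarith)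
    have a4 : 3 * u * (u - 1) * M ^ 2 ≤ u ^ 2 * (3 * M ^ 2) := by nlinarith [mul_nonneg hu0.le (sq_nonneg M)]
    linarith
  have hd : ((m/4) * (t + u)) ^ 4 ≤ ((m/4) * t + u * (m/2)) ^ 4 :=
    pow_le_pow_left₀ hbpos.le hb 4
  have step1 : (u * m4 + 3 * u * (u - 1) * m2 ^ 2) / ((m/4) * t + u * (m/2)) ^ 4
      ≤ (u ^ 2 * (M + 3 * M ^ 2)) / (((m/4) * (t + u)) ^ 4) := by
    apply div_le_div₀ (by positivity) hnum (by positivity) hd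
  refine step1.trans ?_
  rw [div_le_div_iff₀ (by positivity) (by positivity)]
  have hrhs : (256 * (M + 3 * M ^ 2) / m ^ 4) * (((m/4) * (t + u)) ^ 4)
      = (M + 3 * M ^ 2) * (t + u) ^ 4 := by
    field_simp
    ring
  rw [hrhs]
  have husq : u ^ 2 ≤ (t + u) ^ 2 := by nlinarith
  have hK4 : 0 < M + 3 * M ^ 2 := by positivity
  calc u ^ 2 * (M + 3 * M ^ 2) * (t + u) ^ 2
      ≤ (t + u) ^ 2 * (M + 3 * M ^ 2) * (t + u) ^ 2 := by
        have := mul_le_mul_of_nonneg_right husq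
          (by positivity : (0:ℝ) ≤ (M + 3 * M ^ 2) * (t + u) ^ 2)
        nlinarith [this]
    _ = (M + 3 * M ^ 2) * (t + u) ^ 4 := by ring

lemma tele_term {K' t x : ℝ} (hK' : 0 < K') (ht : 1 ≤ t) (hx : 0 ≤ x) :
    K' / (t + x + 1) ^ 2 ≤ K' / (t + x) - K' / (t + (x + 1)) := by
  have h1 : 0 < t + x := by linarith
  have h2 : 0 < t + (x + 1) := by linarith
  rw [div_sub_div _ _ h1.ne' h2.ne', div_le_div_iff₀ (by positivity) (by positivity)]
  have key : (t + x) * (t + x + 1) ≤ (t + x + 1) ^ 2 := by nlinarith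
  nlinarith [mul_le_mul_of_nonneg_left key hK'.le]



variable {Ω : Type} [MeasurableSpace Ω] {P : Measure Ω} [IsProbabilityMeasure P]

lemma indepFun_sum_single {X : ℕ → Ω → ℝ} (hX : ∀ i, Measurable (X i))
    (hind : iIndepFun X P) {s : Finset ℕ} {a : ℕ} (ha : a ∉ s) :
    IndepFun (fun ω => ∑ i ∈ s, X i ω) (X a) P := by
  have h := hind.indepFun_finset s {a} (Finset.disjoint_singleton_right.2 ha) hX
  have h2 := h.comp (φ := fun v : ((i : s) → ℝ) => ∑ i, v i)
      (ψ := fun v : ((i : ({a} : Finset ℕ)) → ℝ) => v ⟨a, Finset.mem_singleton_self a⟩)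
      (Finset.univ.measurable_sum fun i _ => measurable_pi_apply i)
      (measurable_pi_apply (X := fun _ : ({a} : Finset ℕ) => ℝ) _)
  convert h2 using 1
  funext ω
  simp only [Function.comp_apply]
  rw [← Finset.sum_coe_sort s (fun i => X i ω)]
  rfl

lemma moments_sum {X : ℕ → Ω → ℝ} (hX : ∀ i, Measurable (X i))
    (hind : iIndepFun X P)
    (hint : ∀ (i : ℕ) (k : ℕ), 1 ≤ k → k ≤ 4 → Integrable (fun ω => X i ω ^ k) P)
    (hmom : ∀ (i : ℕ) (k : ℕ), 1 ≤ k → k ≤ 4 →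
      ∫ ω, X i ω ^ k ∂P = ∫ ω, X 0 ω ^ k ∂P)
    (hm1 : ∫ ω, X 0 ω ∂P = 0)
    (s : Finset ℕ) :
    (∀ k, 1 ≤ k → k ≤ 4 → Integrable (fun ω => (∑ i ∈ s, X i ω) ^ k) P) ∧
    (∫ ω, (∑ i ∈ s, X i ω) ∂P = 0) ∧
    (∫ ω, (∑ i ∈ s, X i ω) ^ 2 ∂P = s.card * ∫ ω, X 0 ω ^ 2 ∂P) ∧
    (∫ ω, (∑ i ∈ s, X i ω) ^ 3 ∂P = s.card * ∫ ω, X 0 ω ^ 3 ∂P) ∧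
    (∫ ω, (∑ i ∈ s, X i ω) ^ 4 ∂P =
      s.card * ∫ ω, X 0 ω ^ 4 ∂P
        + 3 * s.card * ((s.card : ℝ) - 1) * (∫ ω, X 0 ω ^ 2 ∂P) ^ 2) := by
  classical
  induction s using Finset.cons_induction with
  | empty =>
      refine ⟨fun k hk1 hk4 => ?_, by simp, by simp, by simp, by simp⟩
      simpa [zero_pow (by omega : k ≠ 0)] using (integrable_const (0:ℝ))
  | cons a s ha ih =>
      obtain ⟨iS, eS1, eS2, eS3, eS4⟩ := ih
      set m2 := ∫ ω, X 0 ω ^ 2 ∂P with hm2def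
      set m3 := ∫ ω, X 0 ω ^ 3 ∂P with hm3def
      set m4 := ∫ ω, X 0 ω ^ 4 ∂P with hm4def
      set n := (s.card : ℝ) with hn
      set S : Ω → ℝ := fun ω => ∑ i ∈ s, X i ω with hS
      set Y : Ω → ℝ := fun ω => X a ω with hY
      have hsum : ∀ ω, (∑ i ∈ Finset.cons a s ha, X i ω) = Y ω + S ω := by
        intro ω; rw [Finset.sum_cons]
      have hSY : IndepFun S Y P := indepFun_sum_single hX hind ha
      have hSYjk : ∀ j k : ℕ, IndepFun (fun ω => S ω ^ j) (fun ω => Y ω ^ k) P := by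
        intro j k
        exact hSY.comp (measurable_id.pow_const j) (measurable_id.pow_const k)
      have iS' : ∀ k, 1 ≤ k → k ≤ 4 → Integrable (fun ω => S ω ^ k) P :=
        fun k h1 h4 => iS k h1 h4
      have intY : ∀ k, 1 ≤ k → k ≤ 4 → Integrable (fun ω => Y ω ^ k) P :=
        fun k h1 h4 => hint a k h1 h4
      have intP : ∀ j k : ℕ, 1 ≤ j → j ≤ 4 → 1 ≤ k → k ≤ 4 →
          Integrable (fun ω => S ω ^ j * Y ω ^ k) P := by
        intro j k hj1 hj4 hk1 hk4
        exact (hSYjk j k).integrable_mul (iS' j hj1 hj4) (intY k hk1 hk4)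
      have EP : ∀ j k : ℕ, 1 ≤ j → j ≤ 4 → 1 ≤ k → k ≤ 4 →
          ∫ ω, S ω ^ j * Y ω ^ k ∂P = (∫ ω, S ω ^ j ∂P) * ∫ ω, Y ω ^ k ∂P := by
        intro j k hj1 hj4 hk1 hk4
        exact (hSYjk j k).integral_fun_mul_eq_mul_integral (iS' j hj1 hj4).aestronglyMeasurable (intY k hk1 hk4).aestronglyMeasurable
      have eS1' : ∫ ω, S ω ^ 1 ∂P = 0 := by simpa using eS1
      have eS2' : ∫ ω, S ω ^ 2 ∂P = n * m2 := eS2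
      have eS3' : ∫ ω, S ω ^ 3 ∂P = n * m3 := eS3
      have eS4' : ∫ ω, S ω ^ 4 ∂P = n * m4 + 3 * n * (n - 1) * m2 ^ 2 := eS4
      have eY : ∀ k, 1 ≤ k → k ≤ 4 → ∫ ω, Y ω ^ k ∂P = ∫ ω, X 0 ω ^ k ∂P :=
        fun k h1 h4 => hmom a k h1 h4
      have eY1 : ∫ ω, Y ω ^ 1 ∂P = 0 := by
        rw [eY 1 le_rfl (by norm_num)]; simpa using hm1
      have eY2 : ∫ ω, Y ω ^ 2 ∂P = m2 := eY 2 (by norm_num) (by norm_num)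
      have eY3 : ∫ ω, Y ω ^ 3 ∂P = m3 := eY 3 (by norm_num) (by norm_num)
      have eY4 : ∫ ω, Y ω ^ 4 ∂P = m4 := eY 4 (by norm_num) (by norm_num)
      have iY1 := intY 1 (by norm_num) (by norm_num)
      have iY2 := intY 2 (by norm_num) (by norm_num)
      have iY3 := intY 3 (by norm_num) (by norm_num)
      have iY4 := intY 4 (by norm_num) (by norm_num)
      have iS1 := iS' 1 (by norm_num) (by norm_num)
      have iS2 := iS' 2 (by norm_num) (by norm_num)
      have iS3 := iS' 3 (by norm_num) (by norm_num)
      have iS4 := iS' 4 (by norm_num) (by norm_num)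
      have iP11 := intP 1 1 (by norm_num) (by norm_num) (by norm_num) (by norm_num)
      have iP12 := intP 1 2 (by norm_num) (by norm_num) (by norm_num) (by norm_num)
      have iP21 := intP 2 1 (by norm_num) (by norm_num) (by norm_num) (by norm_num)
      have iP13 := intP 1 3 (by norm_num) (by norm_num) (by norm_num) (by norm_num)
      have iP22 := intP 2 2 (by norm_num) (by norm_num) (by norm_num) (by norm_num)
      have iP31 := intP 3 1 (by norm_num) (by norm_num) (by norm_num) (by norm_num)
      have eP11 := EP 1 1 (by norm_num) (by norm_num) (by norm_num) (by norm_num)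
      have eP12 := EP 1 2 (by norm_num) (by norm_num) (by norm_num) (by norm_num)
      have eP21 := EP 2 1 (by norm_num) (by norm_num) (by norm_num) (by norm_num)
      have eP13 := EP 1 3 (by norm_num) (by norm_num) (by norm_num) (by norm_num)
      have eP22 := EP 2 2 (by norm_num) (by norm_num) (by norm_num) (by norm_num)
      have eP31 := EP 3 1 (by norm_num) (by norm_num) (by norm_num) (by norm_num)
      have exp2 : (fun ω => (Y ω + S ω) ^ 2)
          = fun ω => Y ω ^ 2 + (2 * (S ω ^ 1 * Y ω ^ 1) + S ω ^ 2) := by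
        funext ω; ring
      have exp3 : (fun ω => (Y ω + S ω) ^ 3)
          = fun ω => Y ω ^ 3 + (3 * (S ω ^ 1 * Y ω ^ 2) + (3 * (S ω ^ 2 * Y ω ^ 1) + S ω ^ 3)) := by
        funext ω; ring
      have exp4 : (fun ω => (Y ω + S ω) ^ 4)
          = fun ω => Y ω ^ 4 + (4 * (S ω ^ 1 * Y ω ^ 3) + (6 * (S ω ^ 2 * Y ω ^ 2)
              + (4 * (S ω ^ 3 * Y ω ^ 1) + S ω ^ 4))) := by
        funext ω; ring
      have iA2 : Integrable (fun ω => 2 * (S ω ^ 1 * Y ω ^ 1) + S ω ^ 2) P :=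
        (iP11.const_mul 2).add iS2
      have iA3b : Integrable (fun ω => 3 * (S ω ^ 2 * Y ω ^ 1) + S ω ^ 3) P :=
        (iP21.const_mul 3).add iS3
      have iA3 : Integrable
          (fun ω => 3 * (S ω ^ 1 * Y ω ^ 2) + (3 * (S ω ^ 2 * Y ω ^ 1) + S ω ^ 3)) P :=
        (iP12.const_mul 3).add iA3b
      have iA4c : Integrable (fun ω => 4 * (S ω ^ 3 * Y ω ^ 1) + S ω ^ 4) P :=
        (iP31.const_mul 4).add iS4
      have iA4b : Integrable
          (fun ω => 6 * (S ω ^ 2 * Y ω ^ 2) + (4 * (S ω ^ 3 * Y ω ^ 1) + S ω ^ 4)) P :=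
        (iP22.const_mul 6).add iA4c
      have iA4 : Integrable (fun ω => 4 * (S ω ^ 1 * Y ω ^ 3) + (6 * (S ω ^ 2 * Y ω ^ 2)
          + (4 * (S ω ^ 3 * Y ω ^ 1) + S ω ^ 4))) P :=
        (iP13.const_mul 4).add iA4b
      have int1 : Integrable (fun ω => Y ω + S ω) P := by
        refine Integrable.add ?_ ?_
        · simpa using iY1
        · simpa using iS1
      have int2 : Integrable (fun ω => (Y ω + S ω) ^ 2) P := by
        rw [exp2]; exact iY2.add iA2
      have int3 : Integrable (fun ω => (Y ω + S ω) ^ 3) P := by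
        rw [exp3]; exact iY3.add iA3
      have int4 : Integrable (fun ω => (Y ω + S ω) ^ 4) P := by
        rw [exp4]; exact iY4.add iA4
      have I1 : ∫ ω, (Y ω + S ω) ∂P = 0 := by
        rw [integral_add (by simpa using iY1) (by simpa using iS1)]
        have h1 : ∫ ω, Y ω ∂P = 0 := by simpa using eY1
        have h2 : ∫ ω, S ω ∂P = 0 := by simpa using eS1'
        rw [h1, h2]; ring
      have I2 : ∫ ω, (Y ω + S ω) ^ 2 ∂P = (n + 1) * m2 := by
        rw [exp2, integral_add iY2 iA2, integral_add (iP11.const_mul 2) iS2,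
          integral_const_mul _ _, eP11, eS1', eY2, eS2']
        ring
      have I3 : ∫ ω, (Y ω + S ω) ^ 3 ∂P = (n + 1) * m3 := by
        rw [exp3, integral_add iY3 iA3, integral_add (iP12.const_mul 3) iA3b,
          integral_add (iP21.const_mul 3) iS3, integral_const_mul _ _, integral_const_mul _ _,
          eP12, eP21, eS1', eY1, eY3, eS3']
        ring
      have I4 : ∫ ω, (Y ω + S ω) ^ 4 ∂P = (n + 1) * m4 + 3 * (n + 1) * n * m2 ^ 2 := by
        rw [exp4, integral_add iY4 iA4, integral_add (iP13.const_mul 4) iA4b,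
          integral_add (iP22.const_mul 6) iA4c, integral_add (iP31.const_mul 4) iS4,
          integral_const_mul _ _, integral_const_mul _ _, integral_const_mul _ _,
          eP13, eP22, eP31, eS1', eY1, eY2, eY4, eS2', eS4']
        ring
      refine ⟨?_, ?_, ?_, ?_, ?_⟩
      · intro k hk1 hk4
        simp only [hsum]
        interval_cases k
        · simpa using int1
        · exact int2
        · exact int3
        · exact int4
      · simp only [hsum]; exact I1
      · simp only [hsum, Finset.card_cons]; push_cast; rw [I2]
      · simp only [hsum, Finset.card_cons]; push_cast; rw [I3]
      · simp only [hsum, Finset.card_cons]; push_cast; rw [I4]; ring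




lemma markov4 {Y : Ω → ℝ} (hint : Integrable (fun ω => Y ω ^ 4) P)
    {b : ℝ} (hb : 0 < b) :
    P {ω | b < Y ω} ≤ ENNReal.ofReal ((∫ ω, Y ω ^ 4 ∂P) / b ^ 4) := by
  have hsub : {ω | b < Y ω} ⊆ {ω | b ^ 4 ≤ Y ω ^ 4} := by
    intro ω h
    exact pow_le_pow_left₀ hb.le (le_of_lt h) 4
  refine (measure_mono hsub).trans ?_
  have hnn : 0 ≤ᵐ[P] fun ω => Y ω ^ 4 := ae_of_all _ fun ω => by positivity
  have hmk := mul_meas_ge_le_integral_of_nonneg hnn hint (b ^ 4)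
  have hb4 : (0:ℝ) < b ^ 4 := by positivity
  have htR : (P {ω | b ^ 4 ≤ Y ω ^ 4}).toReal ≤ (∫ ω, Y ω ^ 4 ∂P) / b ^ 4 := by
    rw [le_div_iff₀ hb4]; rw [measureReal_def] at hmk; linarith [hmk]
  calc P {ω | b ^ 4 ≤ Y ω ^ 4}
      = ENNReal.ofReal ((P {ω | b ^ 4 ≤ Y ω ^ 4}).toReal) :=
        (ENNReal.ofReal_toReal (measure_ne_top P _)).symm
    _ ≤ _ := ENNReal.ofReal_le_ofReal htR

lemma mass_below {I0 : Ω → ℝ} (hmeas : Measurable I0) {μs m M : ℝ}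
    (hm : 0 < m) (hM : 0 < M)
    (hint : Integrable I0 P) (hmean : ∫ ω, I0 ω ∂P = μs) (hμs : μs ≤ -m)
    (hint2 : Integrable (fun ω => (I0 ω - μs) ^ 2) P)
    (hM2 : ∫ ω, (I0 ω - μs) ^ 2 ∂P ≤ M) :
    ENNReal.ofReal (min (1/2) (m ^ 2 / (64 * M))) ≤ P {ω | I0 ω ≤ -(m/4)} := by
  set A : Set Ω := {ω | I0 ω ≤ -(m/4)} with hAdef
  have hA : MeasurableSet A := hmeas measurableSet_Iic
  set r := (P A).toReal with hrdef
  have hr0 : 0 ≤ r := ENNReal.toReal_nonneg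
  have hr1 : r ≤ 1 := by
    rw [hrdef]
    exact ENNReal.toReal_le_of_le_ofReal zero_le_one (by simpa using prob_le_one (μ := P) (s := A))
  have hPA : P A = ENNReal.ofReal r := (ENNReal.ofReal_toReal (measure_ne_top P A)).symm
  suffices h : min (1/2) (m ^ 2 / (64 * M)) ≤ r by
    rw [hPA]; exact ENNReal.ofReal_le_ofReal h
  rcases le_or_gt (1/2 : ℝ) r with hhalf | hhalf
  · exact le_trans (min_le_left _ _) hhalf
  -- main estimate
  have hAc1 : (P Aᶜ).toReal ≤ 1 := by
    exact ENNReal.toReal_le_of_le_ofReal zero_le_one (by simpa using prob_le_one (μ := P) (s := Aᶜ))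
  have hAc0 : 0 ≤ (P Aᶜ).toReal := ENNReal.toReal_nonneg
  set ε : ℝ := 8 * M / m with hεdef
  have hε : 0 < ε := by positivity
  have e1 : μs = ∫ ω in A, I0 ω ∂P + ∫ ω in Aᶜ, I0 ω ∂P := by
    rw [← hmean, integral_add_compl hA hint]
  have hsubint : Integrable (fun ω => I0 ω - μs) P := hint.sub (integrable_const μs)
  have e2 : -(m/4) * (P Aᶜ).toReal ≤ ∫ ω in Aᶜ, I0 ω ∂P := by
    have hcst : ∫ _ in Aᶜ, (-(m/4)) ∂P = (P Aᶜ).toReal • (-(m/4)) := setIntegral_const _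
    calc -(m/4) * (P Aᶜ).toReal = (P Aᶜ).toReal • (-(m/4)) := by
          rw [smul_eq_mul]; ring
      _ = ∫ _ in Aᶜ, (-(m/4)) ∂P := hcst.symm
      _ ≤ ∫ ω in Aᶜ, I0 ω ∂P := by
          refine setIntegral_mono_on (integrableOn_const (measure_ne_top P _))
            hint.integrableOn hA.compl ?_
          intro x hx
          have hx' : ¬ (I0 x ≤ -(m/4)) := hx
          linarith [lt_of_not_ge hx']
  have e3 : ∫ ω in A, I0 ω ∂P = ∫ ω in A, (I0 ω - μs) ∂P + r * μs := by
    have : ∫ ω in A, I0 ω ∂P = ∫ ω in A, ((I0 ω - μs) + μs) ∂P := by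
      congr 1; funext ω; ring
    rw [this, integral_add hsubint.integrableOn
      (integrableOn_const (measure_ne_top P _)), setIntegral_const]
    simp only [smul_eq_mul, hrdef, measureReal_def]
    try ring
  have habs : ∀ ω, |I0 ω - μs| ≤ (I0 ω - μs) ^ 2 / (2 * ε) + ε / 2 := by
    intro ω
    have key : 2 * ε * |I0 ω - μs| ≤ (I0 ω - μs) ^ 2 + ε ^ 2 := by
      nlinarith [sq_nonneg (|I0 ω - μs| - ε), sq_abs (I0 ω - μs)]
    have h2ε : (0:ℝ) < 2 * ε := by linarith
    rw [← sub_nonneg]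
    have expand : (I0 ω - μs) ^ 2 / (2 * ε) + ε / 2 - |I0 ω - μs|
        = ((I0 ω - μs) ^ 2 + ε ^ 2 - 2 * ε * |I0 ω - μs|) / (2 * ε) := by
      field_simp
    rw [expand]
    exact div_nonneg (by linarith [key]) h2ε.le
  have e4 : -(M / (2 * ε) + ε / 2 * r) ≤ ∫ ω in A, (I0 ω - μs) ∂P := by
    have hint2g : Integrable (fun ω => (I0 ω - μs) ^ 2 / (2 * ε) + ε / 2) P :=
      (hint2.div_const _).add (integrable_const _)
    have hint2' : IntegrableOn (fun ω => (I0 ω - μs) ^ 2 / (2 * ε) + ε / 2) A P :=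
      hint2g.integrableOn
    have hintsub : IntegrableOn (fun ω => I0 ω - μs) A P := hsubint.integrableOn
    have step1 : ∫ ω in A, (I0 ω - μs) ∂P ≥ - ∫ ω in A, ((I0 ω - μs) ^ 2 / (2 * ε) + ε / 2) ∂P := by
      have h1 : ∫ ω in A, (-((I0 ω - μs) ^ 2 / (2 * ε) + ε / 2)) ∂P ≤ ∫ ω in A, (I0 ω - μs) ∂P := by
        refine setIntegral_mono_on hint2'.neg hintsub hA ?_
        intro x _
        have := habs x
        have := neg_abs_le (I0 x - μs)
        linarith
      rw [integral_neg] at h1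
      linarith
    have step2 : ∫ ω in A, ((I0 ω - μs) ^ 2 / (2 * ε) + ε / 2) ∂P ≤ M / (2 * ε) + ε / 2 * r := by
      rw [integral_add ((hint2.div_const (2*ε)).integrableOn)
        (integrableOn_const (measure_ne_top P _)), setIntegral_const]
      have hsq : ∫ ω in A, (I0 ω - μs) ^ 2 / (2 * ε) ∂P = (∫ ω in A, (I0 ω - μs) ^ 2 ∂P) / (2 * ε) := by
        rw [integral_div]
      rw [hsq]
      have hle : ∫ ω in A, (I0 ω - μs) ^ 2 ∂P ≤ M := by
        refine le_trans (setIntegral_le_integral hint2 (ae_of_all _ fun ω => sq_nonneg _)) hM2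
      have : P.real A • (ε / 2) = ε / 2 * r := by rw [smul_eq_mul, hrdef, measureReal_def]; ring
      rw [this]
      have h2ε : 0 < 2 * ε := by linarith
      gcongr
    linarith
  -- combine
  have hcomb : m * (1 - r) ≤ m/4 + M / (2 * ε) + ε / 2 * r := by
    have hμr : μs * (1 - r) ≤ -m * (1 - r) := by nlinarith
    nlinarith [e1, e2, e3, e4, hAc1, hAc0]
  have hM2ε : M / (2 * ε) = m / 16 := by
    rw [hεdef]; field_simp; ring
  have hε2 : ε / 2 = 4 * M / m := by rw [hεdef]; field_simp; ring
  have hr_ge : m ^ 2 / (64 * M) ≤ r := by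
    rw [hM2ε, hε2] at hcomb
    rw [div_le_iff₀ (by positivity)]
    have h := mul_le_mul_of_nonneg_left hcomb hm.le
    have hq : m * (4 * M / m * r) = 4 * M * r := by field_simp
    have hcomb2 : m * m * (1 - r) ≤ m * (m/4) + m * (m/16) + 4 * M * r := by nlinarith [h, hq]
    have hrr : m * m * r ≤ m * m * (1/2) :=
      mul_le_mul_of_nonneg_left hhalf.le (by positivity)
    nlinarith [hcomb2, hrr, mul_nonneg hM.le hr0]
  exact le_trans (min_le_right _ _) hr_ge

end AuxStmt4

theorem stmt4 (μc M p0 : ℝ) (hμc : μc < 0) (hM : 0 < M) (hp0 : 0 < p0) :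
    ∃ p : ℝ, 0 < p ∧
      ∀ (Ω : Type) (_ : MeasurableSpace Ω) (P : Measure Ω), IsProbabilityMeasure P →
        ∀ (I : ℕ → Ω → ℝ), (∀ t, Measurable (I t)) →
          iIndepFun I P →
          (∀ t, IdentDistrib (I t) (I 0) P P) →
          ∀ μstar : ℝ, μstar = ∫ ω, I 0 ω ∂P → μstar ≤ μc →
            (∀ k ∈ Finset.Icc 1 6, Integrable (fun ω => (I 0 ω - μstar) ^ k) P) →
            (∀ k ∈ Finset.Icc 1 6, (∫ ω, (I 0 ω - μstar) ^ k ∂P) ≤ M) →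
            ENNReal.ofReal p0 ≤ P {ω | I 0 ω ≤ 0} →
            ENNReal.ofReal p ≤
              P {ω | ∀ t : ℕ, ∑ s ∈ Finset.range t, I s ω ≤ 0} := by
  set m : ℝ := -μc with hmdef
  have hm : 0 < m := by simp only [hmdef]; linarith
  set δ : ℝ := min (1/2) (m ^ 2 / (64 * M)) with hδdef
  have hδpos : 0 < δ := lt_min (by norm_num) (by positivity)
  set K4 : ℝ := M + 3 * M ^ 2 with hK4def
  have hK4pos : 0 < K4 := by positivity
  set K' : ℝ := 256 * K4 / m ^ 4 with hK'def
  have hK'pos : 0 < K' := by positivity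
  set T : ℕ := max 1 (Nat.ceil (2 * K')) with hTdef
  have hT1 : 1 ≤ T := le_max_left _ _
  have hT1R : (1:ℝ) ≤ (T:ℝ) := by exact_mod_cast hT1
  have hTK : 2 * K' ≤ (T:ℝ) := by
    refine le_trans (Nat.le_ceil _) ?_
    exact_mod_cast le_max_right 1 (Nat.ceil (2 * K'))
  refine ⟨δ ^ T / 2, by positivity, ?_⟩
  intro Ω mΩ P hP I hImeas hIindep hIid μstar hμdef hμle hIint hImom _hp0
  haveI := hP
  set X : ℕ → Ω → ℝ := fun i ω => I i ω - μstar with hXdef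
  have hXmeas : ∀ i, Measurable (X i) := fun i => (hImeas i).sub measurable_const
  have hXind : iIndepFun X P :=
    hIindep.comp (fun _ x => x - μstar) (fun _ => measurable_id.sub measurable_const)
  have hXid : ∀ i, IdentDistrib (X i) (X 0) P P :=
    fun i => (hIid i).comp (measurable_id.sub measurable_const)
  have hXidpow : ∀ i k, IdentDistrib (fun ω => X i ω ^ k) (fun ω => X 0 ω ^ k) P P :=
    fun i k => (hXid i).comp (measurable_id.pow_const k)
  have hXint0 : ∀ k, 1 ≤ k → k ≤ 4 → Integrable (fun ω => X 0 ω ^ k) P :=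
    fun k h1 h4 => hIint k (Finset.mem_Icc.2 ⟨h1, by omega⟩)
  have hXint : ∀ i k, 1 ≤ k → k ≤ 4 → Integrable (fun ω => X i ω ^ k) P :=
    fun i k h1 h4 => ((hXidpow i k).integrable_iff).2 (hXint0 k h1 h4)
  have hXmom : ∀ i k, 1 ≤ k → k ≤ 4 → ∫ ω, X i ω ^ k ∂P = ∫ ω, X 0 ω ^ k ∂P :=
    fun i k _ _ => (hXidpow i k).integral_eq
  have hIint1 : Integrable (I 0) P := by
    have h1 : Integrable (fun ω => (I 0 ω - μstar) ^ 1) P := hIint 1 (by simp)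
    have h1' : Integrable (fun ω => I 0 ω - μstar) P := by simpa using h1
    have h2 : Integrable (fun ω => (I 0 ω - μstar) + μstar) P :=
      h1'.add (integrable_const μstar)
    have heq : (fun ω => (I 0 ω - μstar) + μstar) = I 0 := by funext ω; ring
    rwa [heq] at h2
  have hm1 : ∫ ω, X 0 ω ∂P = 0 := by
    show ∫ ω, (I 0 ω - μstar) ∂P = 0
    rw [integral_sub hIint1 (integrable_const _), integral_const]
    simp [← hμdef]
  have hmoments := moments_sum (P := P) hXmeas hXind hXint hXmom hm1
  set m2 : ℝ := ∫ ω, X 0 ω ^ 2 ∂P with hm2def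
  set m4 : ℝ := ∫ ω, X 0 ω ^ 4 ∂P with hm4def
  have hm2nn : 0 ≤ m2 := integral_nonneg fun ω => by positivity
  have hm4nn : 0 ≤ m4 := integral_nonneg fun ω => by positivity
  have hm2le : m2 ≤ M := hImom 2 (by simp)
  have hm4le : m4 ≤ M := hImom 4 (by simp)
  have hμm : μstar ≤ -m := by rw [hmdef, neg_neg]; exact hμle
  -- single-variable mass below -(m/4)
  have hmass : ENNReal.ofReal δ ≤ P {ω | I 0 ω ≤ -(m/4)} := by
    rw [hδdef]
    exact mass_below (hImeas 0) hm hM hIint1 hμdef.symm hμm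
      (hIint 2 (by simp)) (hImom 2 (by simp))
  -- events
  set bb : ℕ → ℝ := fun u => (m/4) * T + u * (m/2) with hbbdef
  set Z : ℕ → Ω → ℝ := fun u ω => ∑ i ∈ Finset.Ico T (T + u), X i ω with hZdef
  set Bset : Set Ω := ⋂ i ∈ Finset.range T, X i ⁻¹' Set.Iic (-(m/4) - μstar) with hBsetdef
  set Cset : ℕ → Set Ω := fun v => (Z (v+1)) ⁻¹' Set.Iic (bb (v+1)) with hCsetdef
  -- P Bset ≥ ofReal (δ^T)
  have hpre_eq : X 0 ⁻¹' Set.Iic (-(m/4) - μstar) = {ω | I 0 ω ≤ -(m/4)} := by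
    ext ω
    simp only [Set.mem_preimage, Set.mem_Iic, Set.mem_setOf_eq, hXdef]
    constructor <;> intro h <;> linarith
  have hBeq : P Bset = (P {ω | I 0 ω ≤ -(m/4)}) ^ T := by
    rw [hBsetdef,
      (iIndepFun_iff_measure_inter_preimage_eq_mul.mp hXind) (Finset.range T)
        (sets := fun _ => Set.Iic (-(m/4) - μstar)) (fun i _ => measurableSet_Iic)]
    rw [Finset.prod_congr rfl
      (fun i _ => (hXid i).measure_mem_eq (measurableSet_Iic (a := -(m/4) - μstar)))]
    rw [Finset.prod_const, Finset.card_range, hpre_eq]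
  have hPB : ENNReal.ofReal (δ ^ T) ≤ P Bset := by
    rw [hBeq, ENNReal.ofReal_pow hδpos.le]
    exact pow_le_pow_left' hmass T
  -- Markov bound for each tail event
  have hbbval : ∀ v : ℕ, bb (v+1) = (m/4) * (T:ℝ) + ((v:ℝ)+1) * (m/2) := by
    intro v
    simp only [hbbdef]
    push_cast
    ring
  have hbbpos : ∀ v : ℕ, 0 < bb (v+1) := by
    intro v
    rw [hbbval v]
    have ha : 0 < (m/4) * (T:ℝ) := mul_pos (by linarith) (by linarith)
    have hb : 0 ≤ ((v:ℝ)+1) * (m/2) := mul_nonneg (by positivity) (by linarith)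
    linarith
  have hCc : ∀ v : ℕ, P ((Cset v)ᶜ) ≤ ENNReal.ofReal (K' / ((T:ℝ) + v + 1) ^ 2) := by
    intro v
    obtain ⟨hZint, _, _, _, hZ4⟩ := hmoments (Finset.Ico T (T + (v+1)))
    have hcard : (Finset.Ico T (T + (v+1))).card = v + 1 := by
      rw [Nat.card_Ico]; omega
    have hsetc : (Cset v)ᶜ = {ω | bb (v+1) < Z (v+1) ω} := by
      rw [hCsetdef]
      ext ω
      simp [Set.mem_preimage, Set.mem_Iic, not_le]
    have hmk := markov4 (P := P) (Y := Z (v+1)) (by exact hZint 4 (by norm_num) (by norm_num))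
      (hbbpos v)
    rw [hsetc]
    refine hmk.trans (ENNReal.ofReal_le_ofReal ?_)
    -- real arithmetic
    have hZ4v : ∫ ω, Z (v+1) ω ^ 4 ∂P
        = ((v:ℝ)+1) * m4 + 3 * ((v:ℝ)+1) * (((v:ℝ)+1) - 1) * m2 ^ 2 := by
      rw [hZ4, hcard]
      push_cast
      ring
    have harith := markov_arith (m2 := m2) (m4 := m4) (t := (T:ℝ)) (u := (v:ℝ)+1)
      hm hM hm2nn hm2le hm4nn hm4le hT1R
      (by have h := Nat.cast_nonneg (α := ℝ) v; linarith)
    have hKval : K' = 256 * (M + 3 * M ^ 2) / m ^ 4 := by rw [hK'def, hK4def]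
    have hTv : (T:ℝ) + v + 1 = (T:ℝ) + ((v:ℝ)+1) := by ring
    rw [hZ4v, hbbval v, hKval, hTv]
    exact harith
  -- independence of Bset and (Cset v)ᶜ
  have hindBC : ∀ v, P (Bset ∩ (Cset v)ᶜ) = P Bset * P ((Cset v)ᶜ) := by
    intro v
    have hdisj : Disjoint (Finset.range T) (Finset.Ico T (T + (v+1))) := by
      rw [Finset.range_eq_Ico]
      exact Finset.Ico_disjoint_Ico_consecutive 0 T _
    have hIF := hXind.indepFun_finset (Finset.range T) (Finset.Ico T (T + (v+1))) hdisj hXmeas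
    have hsBm : MeasurableSet {w : (i : (Finset.range T : Finset ℕ)) → ℝ |
        ∀ i, w i ≤ -(m/4) - μstar} := by
      have : {w : (i : (Finset.range T : Finset ℕ)) → ℝ | ∀ i, w i ≤ -(m/4) - μstar}
          = ⋂ i, (fun w => w i) ⁻¹' Set.Iic (-(m/4) - μstar) := by
        ext w; simp [Set.mem_iInter]
      rw [this]
      exact MeasurableSet.iInter fun i => (measurable_pi_apply i) measurableSet_Iic
    have hsCm : MeasurableSet {w : (i : (Finset.Ico T (T + (v+1)) : Finset ℕ)) → ℝ |
        ∑ i, w i ≤ bb (v+1)} := by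
      have : {w : (i : (Finset.Ico T (T + (v+1)) : Finset ℕ)) → ℝ | ∑ i, w i ≤ bb (v+1)}
          = (fun w : (i : (Finset.Ico T (T + (v+1)) : Finset ℕ)) → ℝ => ∑ i, w i) ⁻¹'
            Set.Iic (bb (v+1)) := rfl
      rw [this]
      exact (Finset.univ.measurable_sum fun i _ => measurable_pi_apply i) measurableSet_Iic
    have key := (indepFun_iff_measure_inter_preimage_eq_mul.mp hIF)
      {w | ∀ i, w i ≤ -(m/4) - μstar} {w | ∑ i, w i ≤ bb (v+1)}ᶜ hsBm hsCm.compl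
    have hBpre : (fun ω (i : (Finset.range T : Finset ℕ)) => X i ω) ⁻¹'
        {w | ∀ i, w i ≤ -(m/4) - μstar} = Bset := by
      rw [hBsetdef]
      ext ω
      simp [Set.mem_preimage, Set.mem_iInter, Set.mem_Iic, Subtype.forall]
    have hCpre : (fun ω (i : (Finset.Ico T (T + (v+1)) : Finset ℕ)) => X i ω) ⁻¹'
        {w | ∑ i, w i ≤ bb (v+1)}ᶜ = (Cset v)ᶜ := by
      rw [Set.preimage_compl]
      congr 1
      rw [hCsetdef]
      ext ω
      simp only [Set.mem_preimage, Set.mem_setOf_eq, Set.mem_Iic, hZdef]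
      rw [Finset.sum_coe_sort (Finset.Ico T (T + (v+1))) (fun i => X i ω)]
    rw [hBpre, hCpre] at key
    exact key
  -- tail sum bound
  have hsum_half : ∑' v : ℕ, ENNReal.ofReal (K' / ((T:ℝ) + v + 1) ^ 2)
      ≤ ENNReal.ofReal (1/2) := by
    rw [ENNReal.tsum_eq_iSup_sum]
    refine iSup_le fun s => ?_
    have hnn : ∀ v : ℕ, 0 ≤ K' / ((T:ℝ) + v + 1) ^ 2 := fun v => by positivity
    rw [← ENNReal.ofReal_sum_of_nonneg (fun i _ => hnn i)]
    refine ENNReal.ofReal_le_ofReal ?_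
    set N : ℕ := s.sup id + 1 with hNdef
    have hsub : s ⊆ Finset.range N := Finset.subset_range_sup_succ s
    have hstep : ∑ v ∈ s, K' / ((T:ℝ) + v + 1) ^ 2
        ≤ ∑ v ∈ Finset.range N, K' / ((T:ℝ) + v + 1) ^ 2 :=
      Finset.sum_le_sum_of_subset_of_nonneg hsub (fun i _ _ => hnn i)
    refine hstep.trans ?_
    have hterm : ∀ v : ℕ, K' / ((T:ℝ) + v + 1) ^ 2
        ≤ K' / ((T:ℝ) + (v:ℕ)) - K' / ((T:ℝ) + ((v+1 : ℕ):ℝ)) := by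
      intro v
      have h := tele_term (t := (T:ℝ)) (x := (v:ℝ)) hK'pos hT1R (Nat.cast_nonneg v)
      have hc : ((v+1 : ℕ):ℝ) = (v:ℝ) + 1 := by push_cast; ring
      rw [hc]
      exact h
    have htel : ∑ v ∈ Finset.range N, (K' / ((T:ℝ) + (v:ℕ)) - K' / ((T:ℝ) + ((v+1 : ℕ):ℝ)))
        = K' / ((T:ℝ) + ((0:ℕ):ℝ)) - K' / ((T:ℝ) + (N:ℝ)) :=
      Finset.sum_range_sub' (fun w : ℕ => K' / ((T:ℝ) + (w:ℝ))) N
    have hsum2 : ∑ v ∈ Finset.range N, K' / ((T:ℝ) + v + 1) ^ 2 ≤ K' / (T:ℝ) := by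
      have hle := Finset.sum_le_sum (fun v (_ : v ∈ Finset.range N) => hterm v)
      rw [htel] at hle
      have hN0 : (0:ℝ) ≤ K' / ((T:ℝ) + (N:ℝ)) := by positivity
      have h00 : K' / ((T:ℝ) + ((0:ℕ):ℝ)) = K' / (T:ℝ) := by norm_num
      rw [h00] at hle
      linarith
    refine hsum2.trans ?_
    rw [div_le_div_iff₀ (by positivity) (by norm_num)]
    linarith [hTK]
  -- union bound
  have hcover : Bset ⊆ (Bset ∩ ⋂ v, Cset v) ∪ ⋃ v, (Bset ∩ (Cset v)ᶜ) := by
    intro ω hω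
    by_cases h : ∀ v, ω ∈ Cset v
    · exact Or.inl ⟨hω, Set.mem_iInter.2 h⟩
    · push_neg at h
      obtain ⟨v, hv⟩ := h
      exact Or.inr (Set.mem_iUnion.2 ⟨v, hω, hv⟩)
  have hPBle : P Bset ≤ P (Bset ∩ ⋂ v, Cset v) + ∑' v, P (Bset ∩ (Cset v)ᶜ) := by
    refine (measure_mono hcover).trans ?_
    refine (measure_union_le _ _).trans ?_
    exact add_le_add le_rfl (measure_iUnion_le _)
  have htail : ∑' v, P (Bset ∩ (Cset v)ᶜ) ≤ P Bset * ENNReal.ofReal (1/2) := by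
    calc ∑' v, P (Bset ∩ (Cset v)ᶜ) = ∑' v, P Bset * P ((Cset v)ᶜ) := by
          exact tsum_congr fun v => hindBC v
      _ = P Bset * ∑' v, P ((Cset v)ᶜ) := ENNReal.tsum_mul_left
      _ ≤ P Bset * ENNReal.ofReal (1/2) := by
          refine mul_le_mul_right ?_ _
          exact le_trans (ENNReal.tsum_le_tsum hCc) hsum_half
  have hhalfE : ENNReal.ofReal (1/2 : ℝ) = 1/2 := by
    rw [ENNReal.ofReal_div_of_pos (by norm_num), ENNReal.ofReal_one, ENNReal.ofReal_ofNat]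
  have hPBhalf : P Bset * ENNReal.ofReal (1/2) = P Bset / 2 := by
    rw [hhalfE, mul_one_div]
  have hfin : P Bset / 2 ≠ ⊤ :=
    (lt_of_le_of_lt ENNReal.half_le_self (measure_lt_top P _)).ne
  have hmain : P Bset / 2 ≤ P (Bset ∩ ⋂ v, Cset v) := by
    have h2 : P Bset ≤ P (Bset ∩ ⋂ v, Cset v) + P Bset / 2 := by
      refine hPBle.trans ?_
      exact add_le_add le_rfl (htail.trans_eq hPBhalf)
    have h4 : P Bset / 2 + P Bset / 2 ≤ P (Bset ∩ ⋂ v, Cset v) + P Bset / 2 := by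
      rw [ENNReal.add_halves]
      exact h2
    exact (ENNReal.add_le_add_iff_right hfin).1 h4
  -- inclusion into target
  have hincl : Bset ∩ (⋂ v, Cset v) ⊆ {ω | ∀ t : ℕ, ∑ s ∈ Finset.range t, I s ω ≤ 0} := by
    rintro ω ⟨hB, hC⟩
    intro t
    have hBω : ∀ i, i < T → I i ω ≤ -(m/4) := by
      intro i hi
      have h := Set.mem_iInter₂.1 hB i (Finset.mem_range.2 hi)
      simp only [Set.mem_preimage, Set.mem_Iic, hXdef] at h
      linarith
    rcases le_or_gt t T with htT | htT
    · apply Finset.sum_nonpos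
      intro i hi
      have := hBω i (lt_of_lt_of_le (Finset.mem_range.1 hi) htT)
      linarith
    · set u : ℕ := t - T with hudef
      have hu1 : 1 ≤ u := by omega
      have htu : t = T + u := by omega
      have hsplit : ∑ s ∈ Finset.range t, I s ω
          = ∑ s ∈ Finset.range T, I s ω + ∑ s ∈ Finset.Ico T t, I s ω := by
        rw [Finset.range_eq_Ico, Finset.range_eq_Ico,
          Finset.sum_Ico_consecutive _ (Nat.zero_le T) (le_of_lt htT)]
      have h1 : ∑ s ∈ Finset.range T, I s ω ≤ (T:ℝ) * (-(m/4)) := by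
        have hb := Finset.sum_le_card_nsmul (Finset.range T) (fun s => I s ω) (-(m/4))
          (fun i hi => hBω i (Finset.mem_range.1 hi))
        simpa [Finset.card_range, nsmul_eq_mul] using hb
      have hCv : ω ∈ Cset (u - 1) := Set.mem_iInter.1 hC (u - 1)
      have huu : (u - 1) + 1 = u := by omega
      have hZb : ∑ i ∈ Finset.Ico T (T + u), X i ω ≤ (m/4) * T + (u:ℝ) * (m/2) := by
        have h := hCv
        rw [hCsetdef] at h
        simp only [Set.mem_preimage, Set.mem_Iic, hZdef, hbbdef, huu] at h
        exact h
      have h2 : ∑ s ∈ Finset.Ico T t, I s ω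
          = (∑ i ∈ Finset.Ico T (T + u), X i ω) + (u:ℝ) * μstar := by
        rw [htu]
        have hXe : ∀ i, I i ω = X i ω + μstar := fun i => by simp [hXdef]
        rw [Finset.sum_congr rfl (fun i _ => hXe i), Finset.sum_add_distrib,
          Finset.sum_const, Nat.card_Ico]
        have : T + u - T = u := by omega
        rw [this]
        simp [nsmul_eq_mul]
      have hu1R : (1:ℝ) ≤ (u:ℝ) := by exact_mod_cast hu1
      rw [hsplit, h2]
      have hprod : (u:ℝ) * μstar ≤ (u:ℝ) * (-m) :=
        mul_le_mul_of_nonneg_left hμm (by positivity)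
      have hum : 0 ≤ (u:ℝ) * m := mul_nonneg (by positivity) hm.le
      have habstract : ∀ S1 S2 Tr ur μr mr : ℝ, S1 ≤ Tr * -(mr/4) →
          S2 ≤ mr/4 * Tr + ur * (mr/2) → ur * μr ≤ ur * -mr → 0 ≤ ur * mr →
          S1 + (S2 + ur * μr) ≤ 0 := by
        intro S1 S2 Tr ur μr mr a b c d
        linarith
      exact habstract _ _ _ _ _ _ h1 hZb hprod hum
  -- conclude
  calc ENNReal.ofReal (δ ^ T / 2) = ENNReal.ofReal (δ ^ T) / 2 := by
        rw [ENNReal.ofReal_div_of_pos (by norm_num), ENNReal.ofReal_ofNat]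
    _ ≤ P Bset / 2 := ENNReal.div_le_div_right hPB 2
    _ ≤ P (Bset ∩ ⋂ v, Cset v) := hmain
    _ ≤ P {ω | ∀ t : ℕ, ∑ s ∈ Finset.range t, I s ω ≤ 0} := measure_mono hincl
end

section
/- Let (I_t) be i.i.d. real random variables. For nonnegative integers t̃ < T̃, the conditional probability P(∑_{t=0}^{T̃} I_t ≤ 0 | ∀ t' < T̃: ∑_{t=0}^{t'} I_t ≤ 0) is at least the unconditional probability P(∑_{t=0}^{T̃} I_t ≤ 0). -/
open MeasureTheory ProbabilityTheory Finset

lemma my_integrable {α : Type*} [MeasurableSpace α] {f : α → ℝ} (μ : Measure α)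
    [IsFiniteMeasure μ] (hf : Measurable f) (h0 : ∀ x, 0 ≤ f x) (h1 : ∀ x, f x ≤ 1) :
    Integrable f μ :=
  (integrable_const 1).mono' hf.aestronglyMeasurable (ae_of_all _ fun x => by
    rw [Real.norm_eq_abs, abs_of_nonneg (h0 x)]; exact h1 x)

lemma cheb {α : Type*} [MeasurableSpace α] [LinearOrder α] (μ : Measure α)
    [IsProbabilityMeasure μ] {f g : α → ℝ} (hf : Measurable f) (hg : Measurable g)
    (haf : Antitone f) (hag : Antitone g)
    (hf0 : ∀ x, 0 ≤ f x) (hf1 : ∀ x, f x ≤ 1) (hg0 : ∀ x, 0 ≤ g x) (hg1 : ∀ x, g x ≤ 1) :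
    (∫ x, f x ∂μ) * (∫ x, g x ∂μ) ≤ ∫ x, f x * g x ∂μ := by
  have hfg : Measurable (fun x => f x * g x) := hf.mul hg
  have hif : Integrable f μ := my_integrable μ hf hf0 hf1
  have hig : Integrable g μ := my_integrable μ hg hg0 hg1
  have hifg : Integrable (fun x => f x * g x) μ :=
    my_integrable μ hfg (fun x => mul_nonneg (hf0 x) (hg0 x))
      (fun x => mul_le_one₀ (hf1 x) (hg0 x) (hg1 x))
  have key : 0 ≤ ∫ p : α × α, (f p.1 - f p.2) * (g p.1 - g p.2) ∂(μ.prod μ) := by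
    refine integral_nonneg fun p => ?_
    simp only [Pi.zero_apply]
    rcases le_total p.1 p.2 with h | h
    · have h1 := haf h; have h2 := hag h
      nlinarith [mul_nonneg (sub_nonneg.mpr h1) (sub_nonneg.mpr h2)]
    · have h1 := haf h; have h2 := hag h
      nlinarith [mul_nonneg (sub_nonneg.mpr h1) (sub_nonneg.mpr h2)]
  have ia : Integrable (fun p : α × α => f p.1 * g p.1) (μ.prod μ) := by
    simpa using hifg.mul_prod (integrable_const (1:ℝ))
  have ib : Integrable (fun p : α × α => f p.2 * g p.2) (μ.prod μ) := by
    simpa using (integrable_const (1:ℝ)).mul_prod hifg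
  have ic : Integrable (fun p : α × α => f p.1 * g p.2) (μ.prod μ) := hif.mul_prod hig
  have id' : Integrable (fun p : α × α => g p.1 * f p.2) (μ.prod μ) := hig.mul_prod hif
  have E1 : ∫ p : α × α, f p.1 * g p.1 ∂(μ.prod μ) = ∫ x, f x * g x ∂μ := by
    have := integral_prod_mul (μ := μ) (ν := μ) (fun x => f x * g x) (fun _ => (1:ℝ))
    simpa using this
  have E2 : ∫ p : α × α, f p.2 * g p.2 ∂(μ.prod μ) = ∫ x, f x * g x ∂μ := by
    have := integral_prod_mul (μ := μ) (ν := μ) (fun _ => (1:ℝ)) (fun x => f x * g x)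
    simpa using this
  have E3 : ∫ p : α × α, f p.1 * g p.2 ∂(μ.prod μ) = (∫ x, f x ∂μ) * ∫ x, g x ∂μ :=
    integral_prod_mul f g
  have E4 : ∫ p : α × α, g p.1 * f p.2 ∂(μ.prod μ) = (∫ x, g x ∂μ) * ∫ x, f x ∂μ :=
    integral_prod_mul g f
  have hexp : (fun p : α × α => (f p.1 - f p.2) * (g p.1 - g p.2)) =
      fun p => (f p.1 * g p.1 + f p.2 * g p.2) - (f p.1 * g p.2 + g p.1 * f p.2) := by
    funext p; ring
  have hadd1 : Integrable (fun p : α × α => f p.1 * g p.1 + f p.2 * g p.2) (μ.prod μ) :=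
    ia.add ib
  have hadd2 : Integrable (fun p : α × α => f p.1 * g p.2 + g p.1 * f p.2) (μ.prod μ) :=
    ic.add id'
  rw [hexp, integral_sub hadd1 hadd2, integral_add ia ib, integral_add ic id',
    E1, E2, E3, E4] at key
  linarith

noncomputable def ins (n : ℕ) (a : ℝ) (y : Fin n → ℝ) : Fin (n+1) → ℝ :=
  Fin.cons (α := fun _ : Fin (n+1) => ℝ) a y

lemma ins_mono {n : ℕ} {a a' : ℝ} {y y' : Fin n → ℝ} (ha : a ≤ a') (hy : y ≤ y') :
    ins n a y ≤ ins n a' y' := by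
  intro j
  refine Fin.cases ?_ ?_ j
  · exact ha
  · intro k; exact hy k

lemma harris_pi : ∀ (n : ℕ) (μ : Fin n → Measure ℝ), (∀ i, IsProbabilityMeasure (μ i)) →
    ∀ (f g : (Fin n → ℝ) → ℝ), Measurable f → Measurable g → Antitone f → Antitone g →
    (∀ x, 0 ≤ f x) → (∀ x, f x ≤ 1) → (∀ x, 0 ≤ g x) → (∀ x, g x ≤ 1) →
    (∫ x, f x ∂(Measure.pi μ)) * (∫ x, g x ∂(Measure.pi μ)) ≤
      ∫ x, f x * g x ∂(Measure.pi μ) := by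
  intro n
  induction n with
  | zero =>
    intro μ hμ f g hf hg _ _ _ _ _ _
    haveI := hμ
    haveI : IsProbabilityMeasure (Measure.pi μ) := Measure.pi.instIsProbabilityMeasure μ
    have hfc : f = fun _ => f default := funext fun x => congrArg f (Subsingleton.elim x _)
    have hgc : g = fun _ => g default := funext fun x => congrArg g (Subsingleton.elim x _)
    rw [hfc, hgc]
    simp
  | succ n ih =>
    intro μ hμ f g hf hg haf hag hf0 hf1 hg0 hg1
    haveI := hμ
    set ν : Measure (Fin n → ℝ) :=
      Measure.pi (fun j : Fin n => μ ((0 : Fin (n+1)).succAbove j)) with hν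
    haveI : IsProbabilityMeasure ν := Measure.pi.instIsProbabilityMeasure _
    set e := MeasurableEquiv.piFinSuccAbove (fun _ : Fin (n+1) => ℝ) 0 with he
    have hmp : MeasurePreserving (⇑e) (Measure.pi μ) ((μ 0).prod ν) :=
      measurePreserving_piFinSuccAbove μ 0
    have hesymm : ∀ p : ℝ × (Fin n → ℝ), e.symm p = ins n p.1 p.2 := by
      intro p
      simp [he, MeasurableEquiv.piFinSuccAbove_symm_apply, Fin.insertNthEquiv, ins,
        Fin.insertNth_zero]
    have transfer : ∀ (F : (Fin (n+1) → ℝ) → ℝ),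
        ∫ x, F x ∂(Measure.pi μ) =
          ∫ p : ℝ × (Fin n → ℝ), F (ins n p.1 p.2) ∂((μ 0).prod ν) := by
      intro F
      have h := hmp.integral_comp e.measurableEmbedding (fun p => F (e.symm p))
      simp only [MeasurableEquiv.symm_apply_apply] at h
      rw [h]
      exact integral_congr_ae (ae_of_all _ fun p => congrArg F (hesymm p))
    have hins : Measurable (fun p : ℝ × (Fin n → ℝ) => ins n p.1 p.2) := by
      have h : (fun p : ℝ × (Fin n → ℝ) => ins n p.1 p.2) = ⇑e.symm :=
        funext fun p => (hesymm p).symm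
      rw [h]; exact e.symm.measurable
    have hinsa : ∀ a : ℝ, Measurable (fun y : Fin n → ℝ => ins n a y) :=
      fun a => hins.comp (measurable_const.prodMk measurable_id)
    set F : ℝ → ℝ := fun a => ∫ y, f (ins n a y) ∂ν with hF
    set G : ℝ → ℝ := fun a => ∫ y, g (ins n a y) ∂ν with hG
    set FG : ℝ → ℝ := fun a => ∫ y, f (ins n a y) * g (ins n a y) ∂ν with hFG
    have hFmeas : Measurable F :=
      (StronglyMeasurable.integral_prod_right'
        (f := fun p : ℝ × (Fin n → ℝ) => f (ins n p.1 p.2))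
        ((hf.comp hins).stronglyMeasurable)).measurable
    have hGmeas : Measurable G :=
      (StronglyMeasurable.integral_prod_right'
        (f := fun p : ℝ × (Fin n → ℝ) => g (ins n p.1 p.2))
        ((hg.comp hins).stronglyMeasurable)).measurable
    have hFGmeas : Measurable FG :=
      (StronglyMeasurable.integral_prod_right'
        (f := fun p : ℝ × (Fin n → ℝ) => f (ins n p.1 p.2) * g (ins n p.1 p.2))
        (((hf.comp hins).mul (hg.comp hins)).stronglyMeasurable)).measurable
    have hF0 : ∀ a, 0 ≤ F a := fun a => integral_nonneg fun y => hf0 _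
    have hG0 : ∀ a, 0 ≤ G a := fun a => integral_nonneg fun y => hg0 _
    have int_le_one : ∀ (h : (Fin n → ℝ) → ℝ), Measurable h → (∀ y, 0 ≤ h y) →
        (∀ y, h y ≤ 1) → ∫ y, h y ∂ν ≤ 1 := by
      intro h hm h0 h1
      calc ∫ y, h y ∂ν ≤ ∫ _, (1:ℝ) ∂ν :=
            integral_mono (my_integrable ν hm h0 h1) (integrable_const 1) h1
        _ = 1 := by simp
    have hF1 : ∀ a, F a ≤ 1 := fun a =>
      int_le_one _ (hf.comp (hinsa a)) (fun y => hf0 _) (fun y => hf1 _)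
    have hG1 : ∀ a, G a ≤ 1 := fun a =>
      int_le_one _ (hg.comp (hinsa a)) (fun y => hg0 _) (fun y => hg1 _)
    have hFanti : Antitone F := by
      intro a a' haa
      apply integral_mono
      · exact my_integrable ν (hf.comp (hinsa a')) (fun y => hf0 _) (fun y => hf1 _)
      · exact my_integrable ν (hf.comp (hinsa a)) (fun y => hf0 _) (fun y => hf1 _)
      · intro y; exact haf (ins_mono haa le_rfl)
    have hGanti : Antitone G := by
      intro a a' haa
      apply integral_mono
      · exact my_integrable ν (hg.comp (hinsa a')) (fun y => hg0 _) (fun y => hg1 _)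
      · exact my_integrable ν (hg.comp (hinsa a)) (fun y => hg0 _) (fun y => hg1 _)
      · intro y; exact hag (ins_mono haa le_rfl)
    have if1 : Integrable (fun p : ℝ × (Fin n → ℝ) => f (ins n p.1 p.2)) ((μ 0).prod ν) := by
      exact my_integrable _ (hf.comp hins) (fun p => hf0 _) (fun p => hf1 _)
    have ig1 : Integrable (fun p : ℝ × (Fin n → ℝ) => g (ins n p.1 p.2)) ((μ 0).prod ν) := by
      exact my_integrable _ (hg.comp hins) (fun p => hg0 _) (fun p => hg1 _)
    have ifg1 : Integrable (fun p : ℝ × (Fin n → ℝ) => f (ins n p.1 p.2) * g (ins n p.1 p.2))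
        ((μ 0).prod ν) := by
      exact my_integrable _ ((hf.comp hins).mul (hg.comp hins))
        (fun p => mul_nonneg (hf0 _) (hg0 _))
        (fun p => mul_le_one₀ (hf1 _) (hg0 _) (hg1 _))
    have ef : ∫ x, f x ∂(Measure.pi μ) = ∫ a, F a ∂(μ 0) := by
      rw [transfer f, integral_prod _ if1]
    have eg : ∫ x, g x ∂(Measure.pi μ) = ∫ a, G a ∂(μ 0) := by
      rw [transfer g, integral_prod _ ig1]
    have efg : ∫ x, f x * g x ∂(Measure.pi μ) = ∫ a, FG a ∂(μ 0) := by
      rw [transfer (fun x => f x * g x), integral_prod _ ifg1]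
    rw [ef, eg, efg]
    have step1 : ∀ a, F a * G a ≤ FG a := by
      intro a
      exact ih _ (fun j => hμ _)
        (fun y => f (ins n a y)) (fun y => g (ins n a y))
        (hf.comp (hinsa a)) (hg.comp (hinsa a))
        (fun y y' hyy => haf (ins_mono le_rfl hyy))
        (fun y y' hyy => hag (ins_mono le_rfl hyy))
        (fun y => hf0 _) (fun y => hf1 _) (fun y => hg0 _) (fun y => hg1 _)
    calc (∫ a, F a ∂(μ 0)) * ∫ a, G a ∂(μ 0)
        ≤ ∫ a, F a * G a ∂(μ 0) :=
          cheb (μ 0) hFmeas hGmeas hFanti hGanti hF0 hF1 hG0 hG1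
      _ ≤ ∫ a, FG a ∂(μ 0) := by
          apply integral_mono
          · exact my_integrable _ (hFmeas.mul hGmeas)
              (fun a => mul_nonneg (hF0 a) (hG0 a))
              (fun a => mul_le_one₀ (hF1 a) (hG0 a) (hG1 a))
          · exact my_integrable _ hFGmeas
              (fun a => integral_nonneg fun y => mul_nonneg (hf0 _) (hg0 _))
              (fun a => int_le_one _ ((hf.comp (hinsa a)).mul (hg.comp (hinsa a)))
                (fun y => mul_nonneg (hf0 _) (hg0 _))
                (fun y => mul_le_one₀ (hf1 _) (hg0 _) (hg1 _)))
          · exact step1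

lemma map_eq_pi {Ω : Type*} [MeasurableSpace Ω] (P : Measure Ω) [IsProbabilityMeasure P]
    (I : ℕ → Ω → ℝ) (hmeas : ∀ t, Measurable (I t))
    (hindep : iIndepFun I P) (n : ℕ) :
    Measure.pi (fun i : Fin n => P.map (I i)) = P.map (fun ω (i : Fin n) => I i ω) := by
  haveI : ∀ i : Fin n, IsProbabilityMeasure (P.map (I i)) :=
    fun i => Measure.isProbabilityMeasure_map (hmeas i).aemeasurable
  have hJ : Measurable (fun ω (i : Fin n) => I i ω) :=
    measurable_pi_lambda _ fun i => hmeas i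
  refine Measure.pi_eq ?_
  intro s hs
  classical
  set sets : ℕ → Set ℝ := fun t => if h : t < n then s ⟨t, h⟩ else Set.univ with hsets
  have hpre : (fun ω (i : Fin n) => I i ω) ⁻¹' (Set.univ.pi s) =
      ⋂ t ∈ Finset.range n, I t ⁻¹' (sets t) := by
    ext ω
    simp only [Set.mem_preimage, Set.mem_pi, Set.mem_univ, forall_true_left, Set.mem_iInter,
      Finset.mem_range, true_implies]
    constructor
    · intro h t ht
      simp only [hsets, dif_pos ht, Set.mem_preimage]
      exact h ⟨t, ht⟩
    · intro h i
      have := h i i.isLt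
      simpa only [hsets, dif_pos i.isLt, Set.mem_preimage, Fin.eta] using this
  rw [Measure.map_apply hJ (MeasurableSet.univ_pi hs), hpre,
    hindep.measure_inter_preimage_eq_mul (Finset.range n)
      (fun t ht => by
        simp only [hsets]
        split
        · exact hs _
        · exact MeasurableSet.univ)]
  rw [← Fin.prod_univ_eq_prod_range (fun t => P (I t ⁻¹' sets t)) n]
  refine Finset.prod_congr rfl fun i _ => ?_
  rw [Measure.map_apply (hmeas i) (hs i)]
  congr 1
  simp only [hsets, dif_pos i.isLt, Fin.eta]

lemma indicator_antitone {n : ℕ} {S : Set (Fin n → ℝ)}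
    (hlow : ∀ x y : Fin n → ℝ, x ≤ y → y ∈ S → x ∈ S) :
    Antitone (S.indicator (1 : (Fin n → ℝ) → ℝ)) := by
  classical
  intro x y hxy
  by_cases hx : x ∈ S
  · simp only [Set.indicator, hx, if_pos, Pi.one_apply]
    split <;> norm_num
  · have hy : y ∉ S := fun hy => hx (hlow x y hxy hy)
    simp [Set.indicator, hx, hy]

theorem harris_meas {n : ℕ} (μ : Fin n → Measure ℝ) [∀ i, IsProbabilityMeasure (μ i)]
    {A B : Set (Fin n → ℝ)} (hA : MeasurableSet A) (hB : MeasurableSet B)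
    (hAlow : ∀ x y : Fin n → ℝ, x ≤ y → y ∈ A → x ∈ A)
    (hBlow : ∀ x y : Fin n → ℝ, x ≤ y → y ∈ B → x ∈ B) :
    Measure.pi μ A * Measure.pi μ B ≤ Measure.pi μ (A ∩ B) := by
  classical
  haveI : IsProbabilityMeasure (Measure.pi μ) := Measure.pi.instIsProbabilityMeasure μ
  set f : (Fin n → ℝ) → ℝ := A.indicator 1 with hf
  set g : (Fin n → ℝ) → ℝ := B.indicator 1 with hg
  have hmulind : ∀ x, f x * g x = (A ∩ B).indicator (1 : (Fin n → ℝ) → ℝ) x := by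
    intro x
    by_cases hx : x ∈ A <;> by_cases hx' : x ∈ B <;>
      simp [hf, hg, Set.indicator, hx, hx']
  have key := harris_pi n μ (fun i => inferInstance) f g
    (measurable_one.indicator hA) (measurable_one.indicator hB)
    (indicator_antitone hAlow) (indicator_antitone hBlow)
    (fun x => Set.indicator_nonneg (fun _ _ => zero_le_one) x)
    (fun x => Set.indicator_le_self' (fun _ _ => zero_le_one) x)
    (fun x => Set.indicator_nonneg (fun _ _ => zero_le_one) x)
    (fun x => Set.indicator_le_self' (fun _ _ => zero_le_one) x)
  rw [hf, hg, integral_indicator_one hA, integral_indicator_one hB] at key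
  have e3 : ∫ x, f x * g x ∂(Measure.pi μ) = (Measure.pi μ (A ∩ B)).toReal := by
    rw [show (fun x => f x * g x) = (A ∩ B).indicator 1 from funext hmulind,
      integral_indicator_one (hA.inter hB)]
    rfl
  rw [e3] at key
  refine (ENNReal.toReal_le_toReal ?_ (measure_ne_top _ _)).mp ?_
  · exact ENNReal.mul_ne_top (measure_ne_top _ _) (measure_ne_top _ _)
  · rw [ENNReal.toReal_mul]; exact key

theorem stmt5 {Ω : Type*} [MeasurableSpace Ω] (P : Measure Ω) [IsProbabilityMeasure P]
    (I : ℕ → Ω → ℝ) (hmeas : ∀ t, Measurable (I t))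
    (hindep : iIndepFun I P)
    (hident : ∀ t, IdentDistrib (I t) (I 0) P P)
    (T : ℕ)
    (hpos : P {ω | ∀ t' < T, ∑ t ∈ Finset.range (t' + 1), I t ω ≤ 0} ≠ 0) :
    P {ω | ∑ t ∈ Finset.range (T + 1), I t ω ≤ 0} ≤
      P[{ω | ∑ t ∈ Finset.range (T + 1), I t ω ≤ 0} |
        {ω | ∀ t' < T, ∑ t ∈ Finset.range (t' + 1), I t ω ≤ 0}] := by
  classical
  set A : Set Ω := {ω | ∑ t ∈ Finset.range (T + 1), I t ω ≤ 0} with hA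
  set B : Set Ω := {ω | ∀ t' < T, ∑ t ∈ Finset.range (t' + 1), I t ω ≤ 0} with hB
  set J : Ω → (Fin (T + 1) → ℝ) := fun ω i => I i ω with hJdef
  have hJ : Measurable J := measurable_pi_lambda _ fun i => hmeas i
  set A' : Set (Fin (T + 1) → ℝ) := {x | ∑ i : Fin (T + 1), x i ≤ 0} with hA'
  set B' : Set (Fin (T + 1) → ℝ) :=
    {x | ∀ t' < T, (∑ i : Fin (T + 1), if (i : ℕ) ≤ t' then x i else 0) ≤ 0} with hB'
  have hMA' : MeasurableSet A' :=
    measurableSet_le (Finset.measurable_sum _ fun i _ => measurable_pi_apply i)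
      measurable_const
  have hMB' : MeasurableSet B' := by
    have : B' = ⋂ (t' : ℕ) (_ : t' < T),
        {x : Fin (T + 1) → ℝ | (∑ i : Fin (T + 1), if (i : ℕ) ≤ t' then x i else 0) ≤ 0} := by
      ext x; simp [hB', Set.mem_iInter]
    rw [this]
    refine MeasurableSet.iInter fun t' => MeasurableSet.iInter fun _ => ?_
    refine measurableSet_le (Finset.measurable_sum _ fun i _ => ?_) measurable_const
    by_cases h : (i : ℕ) ≤ t' <;> simp [h]
    · exact measurable_pi_apply i
  have hsum : ∀ (ω : Ω) (t' : ℕ), t' < T →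
      (∑ i : Fin (T + 1), if (i : ℕ) ≤ t' then I i ω else 0) =
        ∑ t ∈ Finset.range (t' + 1), I t ω := by
    intro ω t' ht
    rw [Fin.sum_univ_eq_sum_range (fun t => if t ≤ t' then I t ω else 0) (T + 1),
      ← Finset.sum_filter]
    congr 1
    ext a
    simp only [Finset.mem_filter, Finset.mem_range, Nat.lt_succ_iff]
    omega
  have hJA : J ⁻¹' A' = A := by
    ext ω
    simp only [Set.mem_preimage, hA', Set.mem_setOf_eq, hA, hJdef]
    rw [Fin.sum_univ_eq_sum_range (fun t => I t ω) (T + 1)]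
  have hJB : J ⁻¹' B' = B := by
    ext ω
    simp only [Set.mem_preimage, hB', Set.mem_setOf_eq, hB, hJdef]
    exact forall₂_congr fun t' ht => by rw [hsum ω t' ht]
  have hMA : MeasurableSet A := hJA ▸ hJ hMA'
  have hMB : MeasurableSet B := hJB ▸ hJ hMB'
  haveI : ∀ i : Fin (T + 1), IsProbabilityMeasure (P.map (I i)) :=
    fun i => Measure.isProbabilityMeasure_map (hmeas i).aemeasurable
  have hAlow : ∀ x y : Fin (T + 1) → ℝ, x ≤ y → y ∈ A' → x ∈ A' := by
    intro x y hxy hy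
    exact le_trans (Finset.sum_le_sum fun i _ => hxy i) hy
  have hBlow : ∀ x y : Fin (T + 1) → ℝ, x ≤ y → y ∈ B' → x ∈ B' := by
    intro x y hxy hy t' ht
    refine le_trans (Finset.sum_le_sum fun i _ => ?_) (hy t' ht)
    by_cases h : (i : ℕ) ≤ t' <;> simp [h]
    exact hxy i
  have hmap := map_eq_pi P I hmeas hindep (T + 1)
  have harr := harris_meas (fun i : Fin (T + 1) => P.map (I i)) hMA' hMB' hAlow hBlow
  rw [hmap, Measure.map_apply hJ hMA', Measure.map_apply hJ hMB',
    Measure.map_apply hJ (hMA'.inter hMB'), Set.preimage_inter, hJA, hJB] at harr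
  -- conclude
  rw [cond_apply hMB, ← ENNReal.div_eq_inv_mul]
  refine (ENNReal.le_div_iff_mul_le (Or.inl hpos) (Or.inl (measure_ne_top P B))).mpr ?_
  rw [Set.inter_comm]
  exact harr
end

section
/- There exists a function h: ℝ → ℝ such that for any independent real random variables A and B with mean zero and finite moments up to order 6, if E[(A+B)^6] ≤ M then |E[(A+B)^i]| ≤ h(M), |E[A^i]| ≤ h(M), and |E[B^i]| ≤ h(M) for every i ∈ {1,…,6}. -/
/-!
Expanding `E[(A+B)^n]` binomially, independence factors every mixed moment and the mean-zero
hypothesis kills the terms containing a first moment. In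
`E[(A+B)^6] = E[A^6] + 15 E[A^4] E[B^2] + 20 E[A^3] E[B^3] + 15 E[A^2] E[B^4] + E[B^6]`
every term except `20 E[A^3] E[B^3]` is nonnegative, and the third moments are controlled through
`|x^3| ≤ 1 + x^4` by the fourth moments, which the same expansion in degree four bounds by
`E[(A+B)^4] ≤ 1 + E[(A+B)^6]`. So `E[A^6] ≤ M + 20 (M+2)^2`, and `|x^i| ≤ 1 + x^6` bounds all
lower moments.
-/

open MeasureTheory ProbabilityTheory

lemma abs_pow_le_one_add_pow_of_even (x : ℝ) {i j : ℕ} (hij : i ≤ j) (hj : Even j) :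
    |x ^ i| ≤ 1 + x ^ j := by
  rw [abs_pow, ← hj.pow_abs x]
  rcases le_or_gt |x| 1 with hx | hx
  · have : |x| ^ i ≤ 1 := pow_le_one₀ (abs_nonneg x) hx
    linarith [pow_nonneg (abs_nonneg x) j]
  · linarith [pow_le_pow_right₀ hx.le hij]

namespace ProbabilityTheory

variable {Ω : Type*} [MeasurableSpace Ω] {P : Measure Ω} {A B : Ω → ℝ}

lemma integral_even_pow_nonneg (X : Ω → ℝ) {n : ℕ} (hn : Even n) : 0 ≤ ∫ ω, X ω ^ n ∂P :=
  integral_nonneg fun ω => hn.pow_nonneg (X ω)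

lemma IndepFun.integral_add_pow (hAB : IndepFun A B P) (n : ℕ)
    (hA : ∀ k ≤ n, Integrable (fun ω => A ω ^ k) P)
    (hB : ∀ k ≤ n, Integrable (fun ω => B ω ^ k) P) :
    ∫ ω, (A ω + B ω) ^ n ∂P =
      ∑ j ∈ Finset.range (n + 1),
        (∫ ω, A ω ^ j ∂P) * (∫ ω, B ω ^ (n - j) ∂P) * n.choose j := by
  have hindep (j : ℕ) : IndepFun (fun ω => A ω ^ j) (fun ω => B ω ^ (n - j)) P :=
    hAB.comp (measurable_id.pow_const j) (measurable_id.pow_const (n - j))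
  have hle {j : ℕ} (hj : j ∈ Finset.range (n + 1)) : j ≤ n :=
    Nat.lt_succ_iff.mp (Finset.mem_range.mp hj)
  have hint (j : ℕ) (hj : j ∈ Finset.range (n + 1)) :
      Integrable (fun ω => A ω ^ j * B ω ^ (n - j) * n.choose j) P :=
    ((hindep j).integrable_mul (hA j (hle hj)) (hB _ (n.sub_le j))).mul_const _
  simp_rw [add_pow]
  rw [integral_finsetSum _ hint]
  refine Finset.sum_congr rfl fun j hj => ?_
  rw [integral_mul_const]
  congr 1
  exact (hindep j).integral_fun_mul_eq_mul_integral (hA j (hle hj)).aestronglyMeasurable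
    (hB _ (n.sub_le j)).aestronglyMeasurable

variable [IsProbabilityMeasure P]

lemma integrable_pow_of_forall_mem_Icc {X : Ω → ℝ} {n : ℕ}
    (h : ∀ k ∈ Finset.Icc 1 n, Integrable (fun ω => X ω ^ k) P) :
    ∀ k ≤ n, Integrable (fun ω => X ω ^ k) P := by
  intro k hk
  rcases Nat.eq_zero_or_pos k with rfl | hk0
  · simp
  · exact h k (Finset.mem_Icc.mpr ⟨hk0, hk⟩)

lemma abs_integral_pow_le_one_add_integral_pow {X : Ω → ℝ} {i j : ℕ} (hij : i ≤ j)
    (hj : Even j) (hXi : Integrable (fun ω => X ω ^ i) P)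
    (hXj : Integrable (fun ω => X ω ^ j) P) :
    |∫ ω, X ω ^ i ∂P| ≤ 1 + ∫ ω, X ω ^ j ∂P :=
  calc |∫ ω, X ω ^ i ∂P| ≤ ∫ ω, |X ω ^ i| ∂P := abs_integral_le_integral_abs
    _ ≤ ∫ ω, (1 + X ω ^ j) ∂P :=
        integral_mono hXi.abs ((integrable_const 1).add hXj) fun ω =>
          abs_pow_le_one_add_pow_of_even (X ω) hij hj
    _ = 1 + ∫ ω, X ω ^ j ∂P := by simp [integral_add (integrable_const 1) hXj]

lemma IndepFun.integral_add_pow_four_of_integral_eq_zero (hAB : IndepFun A B P)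
    (hA0 : ∫ ω, A ω ∂P = 0) (hB0 : ∫ ω, B ω ∂P = 0)
    (hA : ∀ k ≤ 4, Integrable (fun ω => A ω ^ k) P)
    (hB : ∀ k ≤ 4, Integrable (fun ω => B ω ^ k) P) :
    ∫ ω, (A ω + B ω) ^ 4 ∂P =
      ∫ ω, A ω ^ 4 ∂P + 6 * (∫ ω, A ω ^ 2 ∂P) * (∫ ω, B ω ^ 2 ∂P) + ∫ ω, B ω ^ 4 ∂P := by
  rw [hAB.integral_add_pow 4 hA hB]
  simp [Finset.sum_range_succ, hA0, hB0, Nat.choose]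
  ring

lemma IndepFun.integral_add_pow_six_of_integral_eq_zero (hAB : IndepFun A B P)
    (hA0 : ∫ ω, A ω ∂P = 0) (hB0 : ∫ ω, B ω ∂P = 0)
    (hA : ∀ k ≤ 6, Integrable (fun ω => A ω ^ k) P)
    (hB : ∀ k ≤ 6, Integrable (fun ω => B ω ^ k) P) :
    ∫ ω, (A ω + B ω) ^ 6 ∂P =
      ∫ ω, A ω ^ 6 ∂P + 15 * (∫ ω, A ω ^ 4 ∂P) * (∫ ω, B ω ^ 2 ∂P)
        + 20 * (∫ ω, A ω ^ 3 ∂P) * (∫ ω, B ω ^ 3 ∂P)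
        + 15 * (∫ ω, A ω ^ 2 ∂P) * (∫ ω, B ω ^ 4 ∂P) + ∫ ω, B ω ^ 6 ∂P := by
  rw [hAB.integral_add_pow 6 hA hB]
  simp [Finset.sum_range_succ, hA0, hB0, Nat.choose]
  ring

lemma IndepFun.integral_pow_four_le_integral_add_pow_four (hAB : IndepFun A B P)
    (hA0 : ∫ ω, A ω ∂P = 0) (hB0 : ∫ ω, B ω ∂P = 0)
    (hA : ∀ k ≤ 4, Integrable (fun ω => A ω ^ k) P)
    (hB : ∀ k ≤ 4, Integrable (fun ω => B ω ^ k) P) :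
    ∫ ω, A ω ^ 4 ∂P ≤ ∫ ω, (A ω + B ω) ^ 4 ∂P := by
  rw [hAB.integral_add_pow_four_of_integral_eq_zero hA0 hB0 hA hB]
  have hA2 := integral_even_pow_nonneg (P := P) A even_two
  have hB2 := integral_even_pow_nonneg (P := P) B even_two
  have hB4 := integral_even_pow_nonneg (P := P) B (by decide : Even 4)
  nlinarith [mul_nonneg hA2 hB2]

lemma IndepFun.integral_pow_six_le (hAB : IndepFun A B P)
    (hA0 : ∫ ω, A ω ∂P = 0) (hB0 : ∫ ω, B ω ∂P = 0)
    (hA : ∀ k ≤ 6, Integrable (fun ω => A ω ^ k) P)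
    (hB : ∀ k ≤ 6, Integrable (fun ω => B ω ^ k) P) :
    ∫ ω, A ω ^ 6 ∂P ≤
      ∫ ω, (A ω + B ω) ^ 6 ∂P + 20 * |∫ ω, A ω ^ 3 ∂P| * |∫ ω, B ω ^ 3 ∂P| := by
  rw [hAB.integral_add_pow_six_of_integral_eq_zero hA0 hB0 hA hB, mul_assoc 20,
    mul_assoc 20, ← abs_mul]
  have hA2 := integral_even_pow_nonneg (P := P) A even_two
  have hB2 := integral_even_pow_nonneg (P := P) B even_two
  have hA4 := integral_even_pow_nonneg (P := P) A (by decide : Even 4)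
  have hB4 := integral_even_pow_nonneg (P := P) B (by decide : Even 4)
  have hB6 := integral_even_pow_nonneg (P := P) B (by decide : Even 6)
  nlinarith [mul_nonneg hA4 hB2, mul_nonneg hA2 hB4,
    neg_abs_le ((∫ ω, A ω ^ 3 ∂P) * ∫ ω, B ω ^ 3 ∂P)]

lemma IndepFun.abs_integral_pow_three_le (hAB : IndepFun A B P)
    (hA0 : ∫ ω, A ω ∂P = 0) (hB0 : ∫ ω, B ω ∂P = 0)
    (hA : ∀ k ≤ 6, Integrable (fun ω => A ω ^ k) P)
    (hB : ∀ k ≤ 6, Integrable (fun ω => B ω ^ k) P)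
    (hS : ∀ k ≤ 6, Integrable (fun ω => (A ω + B ω) ^ k) P) :
    |∫ ω, A ω ^ 3 ∂P| ≤ 2 + ∫ ω, (A ω + B ω) ^ 6 ∂P :=
  calc |∫ ω, A ω ^ 3 ∂P| ≤ 1 + ∫ ω, A ω ^ 4 ∂P :=
        abs_integral_pow_le_one_add_integral_pow (by norm_num) (by decide) (hA 3 (by norm_num))
          (hA 4 (by norm_num))
    _ ≤ 1 + ∫ ω, (A ω + B ω) ^ 4 ∂P := add_le_add_right
        (hAB.integral_pow_four_le_integral_add_pow_four hA0 hB0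
          (fun k hk => hA k (by omega)) (fun k hk => hB k (by omega))) 1
    _ ≤ 1 + (1 + ∫ ω, (A ω + B ω) ^ 6 ∂P) := add_le_add_right
        ((le_abs_self _).trans (abs_integral_pow_le_one_add_integral_pow (by norm_num)
          (by decide) (hS 4 (by norm_num)) (hS 6 le_rfl))) 1
    _ = 2 + ∫ ω, (A ω + B ω) ^ 6 ∂P := by ring

lemma IndepFun.integral_pow_six_le_of_integral_add_pow_six_le (hAB : IndepFun A B P)
    (hA0 : ∫ ω, A ω ∂P = 0) (hB0 : ∫ ω, B ω ∂P = 0)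
    (hA : ∀ k ≤ 6, Integrable (fun ω => A ω ^ k) P)
    (hB : ∀ k ≤ 6, Integrable (fun ω => B ω ^ k) P)
    (hS : ∀ k ≤ 6, Integrable (fun ω => (A ω + B ω) ^ k) P)
    {M : ℝ} (hM : ∫ ω, (A ω + B ω) ^ 6 ∂P ≤ M) :
    ∫ ω, A ω ^ 6 ∂P ≤ M + 20 * (M + 2) ^ 2 := by
  have hS' : ∀ k ≤ 6, Integrable (fun ω => (B ω + A ω) ^ k) P := by
    simpa only [add_comm] using hS
  have hA3 : |∫ ω, A ω ^ 3 ∂P| ≤ M + 2 := by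
    linarith [hAB.abs_integral_pow_three_le hA0 hB0 hA hB hS]
  have hB3 : |∫ ω, B ω ^ 3 ∂P| ≤ M + 2 := by
    have := hAB.symm.abs_integral_pow_three_le hB0 hA0 hB hA hS'
    simp only [add_comm (B _)] at this
    linarith
  have hprod : |∫ ω, A ω ^ 3 ∂P| * |∫ ω, B ω ^ 3 ∂P| ≤ (M + 2) ^ 2 := by
    rw [sq]; exact mul_le_mul hA3 hB3 (abs_nonneg _) ((abs_nonneg _).trans hA3)
  linarith [hAB.integral_pow_six_le hA0 hB0 hA hB]

end ProbabilityTheory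

theorem stmt8 :
    ∃ h : ℝ → ℝ,
      ∀ (Ω : Type) (_ : MeasurableSpace Ω) (P : Measure Ω), IsProbabilityMeasure P →
        ∀ (A B : Ω → ℝ), Measurable A → Measurable B → IndepFun A B P →
          (∫ ω, A ω ∂P) = 0 → (∫ ω, B ω ∂P) = 0 →
          (∀ k ∈ Finset.Icc 1 6, Integrable (fun ω => A ω ^ k) P) →
          (∀ k ∈ Finset.Icc 1 6, Integrable (fun ω => B ω ^ k) P) →
          (∀ k ∈ Finset.Icc 1 6, Integrable (fun ω => (A ω + B ω) ^ k) P) →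
          ∀ M : ℝ, (∫ ω, (A ω + B ω) ^ 6 ∂P) ≤ M →
            ∀ i ∈ Finset.Icc 1 6,
              |∫ ω, (A ω + B ω) ^ i ∂P| ≤ h M ∧
              |∫ ω, A ω ^ i ∂P| ≤ h M ∧
              |∫ ω, B ω ^ i ∂P| ≤ h M := by
  refine ⟨fun M => 1 + M + 20 * (M + 2) ^ 2, ?_⟩
  intro Ω _ P _ A B _ _ hAB hA0 hB0 hA hB hS M hM i hi
  replace hA := integrable_pow_of_forall_mem_Icc hA
  replace hB := integrable_pow_of_forall_mem_Icc hB
  replace hS := integrable_pow_of_forall_mem_Icc hS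
  have hi6 : i ≤ 6 := (Finset.mem_Icc.mp hi).2
  have hA6 := hAB.integral_pow_six_le_of_integral_add_pow_six_le hA0 hB0 hA hB hS hM
  have hB6 := hAB.symm.integral_pow_six_le_of_integral_add_pow_six_le hB0 hA0 hB hA
    (by simpa only [add_comm] using hS) (by simpa only [add_comm] using hM)
  have hSi := abs_integral_pow_le_one_add_integral_pow hi6 (by decide) (hS i hi6) (hS 6 le_rfl)
  have hAi := abs_integral_pow_le_one_add_integral_pow hi6 (by decide) (hA i hi6) (hA 6 le_rfl)
  have hBi := abs_integral_pow_le_one_add_integral_pow hi6 (by decide) (hB i hi6) (hB 6 le_rfl)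
  refine ⟨?_, ?_, ?_⟩ <;> linarith [sq_nonneg (M + 2)]
end
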